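/- For every nonnegative integer n and every complex number z, ∑_{k=0}^{⌊n/4⌋} (-1)^k · C(n,4k) · B_{n-4k}(z)/2^{6k} = (1/2^{n+1})·∑_{k=0}^{n} (-1)^k · ((1 + i^k)/(1 + i)^k) · C(n,k) · B_{n-k}(2z), where i is the imaginary unit and C(n,k) denotes the binomial coefficient. -/

import Mathlib

/-!
Put `a = (1 + i)/4`, so that `a⁴ = -1/64`. By the translation formula
`B_n(x + y) = ∑ C(n,k) y^k B_{n-k}(x)` and the roots-of-unity filter, the left-hand side is
`(1/4) ∑_{j<4} B_n(z + i^j a)`. On the right, `(-1)^k (1 + i^k)/(1 + i)^k = (2ia)^k + (2i²a)^k`,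
so the right-hand side is `2^{-(n+1)} (B_n(2(z + ia)) + B_n(2(z + i²a)))`. The duplication formula
`2 B_n(2x) = 2^n (B_n(x) + B_n(x + 1/2))`, together with `ia + 1/2 = a` and `i²a + 1/2 = i³a`,
turns this into the same average of four values. Both formulas come from comparing coefficients
in the generating function `t e^{xt}/(e^t - 1)`.
-/

open Finset

/-- The Bernoulli polynomial `B_n` evaluated at a complex number `z`,
with generating function `t·e^{zt}/(e^t−1) = ∑_{n≥0} B_n(z)·t^n/n!`. -/
noncomputable def bernoulliPoly (n : ℕ) (z : ℂ) : ℂ :=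
  Polynomial.aeval z (Polynomial.bernoulli n)

/-- The Euler polynomial `E_n` evaluated at a complex number `z`,
with generating function `2·e^{zt}/(e^t+1) = ∑_{n≥0} E_n(z)·t^n/n!`,
given by the explicit formula `E_n(z) = ∑_{k=0}^n 2^{-k} ∑_{j=0}^k (-1)^j C(k,j)(z+j)^n`. -/
noncomputable def eulerPoly (n : ℕ) (z : ℂ) : ℂ :=
  ∑ k ∈ range (n + 1), (1 / 2 ^ k : ℂ) *
    ∑ j ∈ range (k + 1), (-1) ^ j * (k.choose j : ℂ) * (z + j) ^ n

open scoped Nat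

lemma IsPrimitiveRoot.sum_pow_pow_eq_ite {R : Type*} [CommRing R] [IsDomain R] {ζ : R} {d : ℕ}
    (hζ : IsPrimitiveRoot ζ d) (m : ℕ) :
    ∑ j ∈ range d, (ζ ^ m) ^ j = if d ∣ m then (d : R) else 0 := by
  split_ifs with hdm
  · simp [(hζ.pow_eq_one_iff_dvd m).2 hdm]
  · have hne : ζ ^ m - 1 ≠ 0 := sub_ne_zero.2 (mt (hζ.pow_eq_one_iff_dvd m).1 hdm)
    refine (mul_eq_zero.1 ?_).resolve_right hne
    rw [geom_sum_mul, ← pow_mul, mul_comm, pow_mul, hζ.pow_eq_one, one_pow, sub_self]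

lemma Finset.sum_range_succ_ite_dvd {M : Type*} [AddCommMonoid M] {d : ℕ} (hd : 0 < d)
    (n : ℕ) (f : ℕ → M) :
    ∑ m ∈ range (n + 1), (if d ∣ m then f m else 0) = ∑ k ∈ range (n / d + 1), f (d * k) := by
  rw [← sum_filter]
  have hfilter : (range (n + 1)).filter (d ∣ ·) = (range (n / d + 1)).image (d * ·) := by
    ext m
    simp only [mem_filter, mem_range, mem_image]
    constructor
    · rintro ⟨hm, k, rfl⟩
      exact ⟨k, by rw [Nat.lt_succ_iff, Nat.le_div_iff_mul_le hd]; lia, rfl⟩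
    · rintro ⟨k, hk, rfl⟩
      refine ⟨?_, dvd_mul_right d k⟩
      rw [Nat.lt_succ_iff, Nat.le_div_iff_mul_le hd] at hk
      lia
  rw [hfilter, sum_image fun a _ b _ h => Nat.eq_of_mul_eq_mul_left hd h]

namespace PowerSeries

lemma exp_sub_one_ne_zero (A : Type*) [Ring A] [Algebra ℚ A] [Nontrivial A] : exp A - 1 ≠ 0 := by
  intro h
  simpa [coeff_exp] using congrArg (coeff 1) h

variable {K : Type*} [Field K] [CharZero K]

lemma factorial_mul_coeff_rescale_exp_mul (c : K) (f : K⟦X⟧) (n : ℕ) :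
    (n ! : K) * coeff n (rescale c (exp K) * f)
      = ∑ k ∈ range (n + 1), (n.choose k : K) * c ^ k * ((n - k)! * coeff (n - k) f) := by
  rw [coeff_mul, Nat.sum_antidiagonal_eq_sum_range_succ_mk, mul_sum]
  refine sum_congr rfl fun k hk => ?_
  have hkn : k ≤ n := Nat.lt_succ_iff.mp (mem_range.mp hk)
  rw [coeff_rescale, coeff_exp, ← Nat.choose_mul_factorial_mul_factorial hkn]
  have : (k ! : K) ≠ 0 := Nat.cast_ne_zero.2 k.factorial_ne_zero
  push_cast
  field_simp

end PowerSeries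

namespace Polynomial

open PowerSeries

variable {K : Type*} [Field K] [CharZero K]

noncomputable def bernoulliEGF (x : K) : K⟦X⟧ :=
  PowerSeries.mk fun n => (n ! : K)⁻¹ * aeval x (bernoulli n)

lemma factorial_mul_coeff_bernoulliEGF (x : K) (n : ℕ) :
    (n ! : K) * PowerSeries.coeff n (bernoulliEGF x) = aeval x (bernoulli n) := by
  rw [bernoulliEGF, PowerSeries.coeff_mk, ← mul_assoc,
    mul_inv_cancel₀ (Nat.cast_ne_zero.2 n.factorial_ne_zero), one_mul]

lemma bernoulliEGF_mul_exp_sub_one (x : K) :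
    bernoulliEGF x * (exp K - 1) = PowerSeries.X * rescale x (exp K) := by
  convert bernoulli_generating_function x using 3
  ext n
  simp [bernoulliEGF, Rat.smul_def]

lemma bernoulliEGF_add (x y : K) : bernoulliEGF (x + y) = rescale y (exp K) * bernoulliEGF x := by
  refine mul_right_cancel₀ (exp_sub_one_ne_zero K) ?_
  rw [mul_assoc, bernoulliEGF_mul_exp_sub_one, bernoulliEGF_mul_exp_sub_one,
    ← exp_mul_exp_eq_exp_add]
  ring

lemma bernoulliEGF_two_mul (x : K) :
    PowerSeries.C 2 * bernoulliEGF (2 * x)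
      = rescale 2 (bernoulliEGF x + bernoulliEGF (x + 2⁻¹)) := by
  refine mul_right_cancel₀ (exp_sub_one_ne_zero K) ?_
  have hexp : exp K - 1 = rescale 2 (rescale 2⁻¹ (exp K) - 1) := by
    rw [map_sub, map_one, rescale_rescale, inv_mul_cancel₀ two_ne_zero, rescale_one,
      RingHom.id_apply]
  have hsq : rescale 2⁻¹ (exp K) * rescale 2⁻¹ (exp K) = exp K := by
    rw [exp_mul_exp_eq_exp_add, ← two_mul, mul_inv_cancel₀ two_ne_zero, rescale_one,
      RingHom.id_apply]
  calc PowerSeries.C 2 * bernoulliEGF (2 * x) * (exp K - 1)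
      = PowerSeries.C 2 * (PowerSeries.X * rescale (2 * x) (exp K)) := by
        rw [mul_assoc, bernoulliEGF_mul_exp_sub_one]
    _ = rescale 2 (bernoulliEGF x * (exp K - 1)) := by
        rw [bernoulliEGF_mul_exp_sub_one, map_mul, rescale_X, rescale_rescale, mul_comm x]
        ring
    _ = rescale 2 ((bernoulliEGF x + bernoulliEGF (x + 2⁻¹)) * (rescale 2⁻¹ (exp K) - 1)) := by
        rw [bernoulliEGF_add]
        congr 1
        linear_combination -bernoulliEGF x * hsq
    _ = rescale 2 (bernoulliEGF x + bernoulliEGF (x + 2⁻¹)) * (exp K - 1) := by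
        rw [hexp, map_mul]

theorem aeval_bernoulli_add (x y : K) (n : ℕ) :
    aeval (x + y) (bernoulli n)
      = ∑ k ∈ range (n + 1), (n.choose k : K) * y ^ k * aeval x (bernoulli (n - k)) := by
  simp only [← factorial_mul_coeff_bernoulliEGF, bernoulliEGF_add,
    factorial_mul_coeff_rescale_exp_mul]

theorem two_mul_aeval_bernoulli_two_mul (x : K) (n : ℕ) :
    2 * aeval (2 * x) (bernoulli n)
      = 2 ^ n * (aeval x (bernoulli n) + aeval (x + 2⁻¹) (bernoulli n)) := by
  have h := congrArg (fun f => (n ! : K) * PowerSeries.coeff n f) (bernoulliEGF_two_mul x)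
  simp only [PowerSeries.coeff_C_mul, coeff_rescale, map_add] at h
  rw [← factorial_mul_coeff_bernoulliEGF, ← factorial_mul_coeff_bernoulliEGF,
    ← factorial_mul_coeff_bernoulliEGF]
  linear_combination h

theorem _root_.IsPrimitiveRoot.sum_aeval_bernoulli_add_pow_mul {ζ : K} {d : ℕ}
    (hζ : IsPrimitiveRoot ζ d) (hd : 0 < d) (x a : K) (n : ℕ) :
    ∑ j ∈ range d, aeval (x + ζ ^ j * a) (bernoulli n)
      = d * ∑ k ∈ range (n / d + 1),
          (n.choose (d * k) : K) * a ^ (d * k) * aeval x (bernoulli (n - d * k)) := by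
  simp_rw [aeval_bernoulli_add]
  calc ∑ j ∈ range d, ∑ m ∈ range (n + 1),
          (n.choose m : K) * (ζ ^ j * a) ^ m * aeval x (bernoulli (n - m))
      = ∑ m ∈ range (n + 1), (∑ j ∈ range d, (ζ ^ m) ^ j) *
          ((n.choose m : K) * a ^ m * aeval x (bernoulli (n - m))) := by
        rw [sum_comm]
        refine sum_congr rfl fun m _ => ?_
        rw [sum_mul]
        refine sum_congr rfl fun j _ => ?_
        rw [mul_pow, ← pow_mul, ← pow_mul, mul_comm j m]
        ring
    _ = d * ∑ k ∈ range (n / d + 1),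
          (n.choose (d * k) : K) * a ^ (d * k) * aeval x (bernoulli (n - d * k)) := by
        simp_rw [hζ.sum_pow_pow_eq_ite, ite_mul, zero_mul]
        rw [sum_range_succ_ite_dvd hd, mul_sum]

end Polynomial

open Complex Polynomial

lemma one_add_I_div_four_pow_four_mul (k : ℕ) :
    ((1 + I) / 4) ^ (4 * k) = (-1) ^ k / 2 ^ (6 * k) := by
  rw [pow_mul, pow_mul, ← div_pow]
  congr 1
  linear_combination (I ^ 2 + 4 * I + 5) / 256 * I_sq

lemma neg_one_pow_mul_one_add_I_pow_div (k : ℕ) :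
    (-1 : ℂ) ^ k * ((1 + I ^ k) / (1 + I) ^ k)
      = (2 * (I * ((1 + I) / 4))) ^ k + (2 * (I ^ 2 * ((1 + I) / 4))) ^ k := by
  have h1I : 1 + I ≠ 0 := fun h => by simpa using congrArg re h
  rw [show 2 * (I * ((1 + I) / 4)) = -1 / (1 + I) by
      rw [eq_div_iff h1I]; linear_combination (2 + I) / 2 * I_sq,
    show 2 * (I ^ 2 * ((1 + I) / 4)) = -1 * I / (1 + I) by
      rw [eq_div_iff h1I]; linear_combination (I ^ 2 + 2 * I) / 2 * I_sq,
    div_pow, div_pow, mul_pow]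
  ring

theorem stmt5 (n : ℕ) (z : ℂ) :
    ∑ k ∈ range (n / 4 + 1), (-1 : ℂ) ^ k * (n.choose (4 * k) : ℂ) *
        bernoulliPoly (n - 4 * k) z / 2 ^ (6 * k)
      = (1 / 2 ^ (n + 1) : ℂ) * ∑ k ∈ range (n + 1), (-1 : ℂ) ^ k *
        ((1 + Complex.I ^ k) / (1 + Complex.I) ^ k) * (n.choose k : ℂ) *
        bernoulliPoly (n - k) (2 * z) := by
  set a : ℂ := (1 + I) / 4
  set L := ∑ k ∈ range (n / 4 + 1), (-1 : ℂ) ^ k * (n.choose (4 * k) : ℂ) *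
    bernoulliPoly (n - 4 * k) z / 2 ^ (6 * k)
  have hL : ∑ j ∈ range 4, aeval (z + I ^ j * a) (bernoulli n) = 4 * L := by
    rw [isPrimitiveRoot_I.sum_aeval_bernoulli_add_pow_mul four_pos, mul_sum, mul_sum]
    refine sum_congr rfl fun k _ => ?_
    rw [one_add_I_div_four_pow_four_mul, bernoulliPoly]
    push_cast
    ring
  have hR : ∑ k ∈ range (n + 1), (-1 : ℂ) ^ k * ((1 + I ^ k) / (1 + I) ^ k) *
      (n.choose k : ℂ) * bernoulliPoly (n - k) (2 * z)
      = aeval (2 * (z + I * a)) (bernoulli n) + aeval (2 * (z + I ^ 2 * a)) (bernoulli n) := by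
    simp only [bernoulliPoly, mul_add, aeval_bernoulli_add, neg_one_pow_mul_one_add_I_pow_div,
      ← sum_add_distrib]
    exact sum_congr rfl fun k _ => by ring
  have h₁ := two_mul_aeval_bernoulli_two_mul (z + I * a) n
  have h₂ := two_mul_aeval_bernoulli_two_mul (z + I ^ 2 * a) n
  rw [show z + I * a + 2⁻¹ = z + I ^ 0 * a by linear_combination I_sq / 4] at h₁
  rw [show z + I ^ 2 * a + 2⁻¹ = z + I ^ 3 * a by linear_combination (2 - I ^ 2) / 4 * I_sq] at h₂
  simp only [sum_range_succ, sum_range_zero, zero_add, pow_one] at hL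
  rw [hR]
  field_simp
  linear_combination -h₁ / 2 - h₂ / 2 - 2 ^ n / 2 * hL
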